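/- Let X, Y be real Hilbert spaces, T : X → Y a bounded linear operator, f† ∈ X, n ≥ 1 and m ≥ n integers, ν ∈ (0,1] and A > 0, and assume VSC^{2n−1}(f†, Φ) holds with Φ(t) = A t^{ν/(ν+1)}. Then there exists C > 0 such that for every δ > 0 and every g ∈ Y with ‖g − T f†‖ ≤ δ, every Bregman-iterated Tikhonov sequence (f_k) for the data (g, α) with the parameter choice α := δ^{2/(2n−1+ν)} satisfies ‖f_m − f†‖ ≤ C δ^{(2n−2+ν)/(2n−1+ν)}. -/

import Mathlib

/-!
Write `S = T†T`, `R = (S + α)⁻¹`, `B = αR` and `D = SR`. The normal equation of the `k`-th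
Tikhonov step reads `f_k = R (T† g + α f_{k-1})`, so the error `e_k = f_k - f†` satisfies
`e_k = B e_{k-1} + R T† (g - T f†)`. Here `B` and `D` are commuting self-adjoint contractions,
`‖T B x‖² ≤ α ‖x‖²` and `‖R T† y‖ ≤ ‖y‖ / (2√α)`, hence `‖e_m - Bᵐ e₀‖ ≤ m δ / (2√α)`.
Since `Bʲ Sʲ = αʲ Dʲ`, the remaining term is `Bᵐ e₀ = -αⁿ⁻¹ Q ω` with `Q = Bᵐ⁻ⁿ⁺¹ Dⁿ⁻¹`, and
testing the source condition against `Q² ω` gives `‖Qω‖² ≤ ½‖Qω‖² + A (α ‖Qω‖²)^{ν/(ν+1)}`,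
i.e. `‖Qω‖ ≤ (2A)^{(ν+1)/2} α^{ν/2}`. The choice `α = δ^{2/(2n-1+ν)}` balances
`α^{n-1+ν/2}` against `δ / √α`.
-/

open scoped RealInnerProductSpace

open ContinuousLinearMap
open scoped InnerProduct

theorem le_of_sq_le_half_sq_add_mul_rpow {s α A ν : ℝ} (hs : 0 ≤ s) (hα : 0 ≤ α) (hA : 0 ≤ A)
    (hν : 0 ≤ ν) (h : s ^ 2 ≤ 1 / 2 * s ^ 2 + A * (α * s ^ 2) ^ (ν / (ν + 1))) :
    s ≤ (2 * A) ^ ((ν + 1) / 2) * α ^ (ν / 2) := by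
  rcases hs.eq_or_lt with rfl | hs
  · positivity
  have hu : 0 < s ^ 2 := by positivity
  have hν1 : 0 < ν + 1 := by linarith
  have hκ : ν / (ν + 1) = 1 - 1 / (ν + 1) := by field_simp; ring
  have h1 : (s ^ 2) ^ (1 / (ν + 1)) ≤ 2 * A * α ^ (ν / (ν + 1)) := by
    rw [Real.mul_rpow hα hu.le, hκ, Real.rpow_sub hu, Real.rpow_one, ← hκ] at h
    generalize α ^ (ν / (ν + 1)) = c at h ⊢
    have hp : 0 < (s ^ 2) ^ (1 / (ν + 1)) := by positivity
    field_simp at h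
    nlinarith
  have h2 : s ^ 2 ≤ (2 * A) ^ (ν + 1) * α ^ ν := by
    have := Real.rpow_le_rpow (by positivity) h1 hν1.le
    rwa [← Real.rpow_mul hu.le, one_div_mul_cancel hν1.ne', Real.rpow_one,
      Real.mul_rpow (by positivity) (by positivity), ← Real.rpow_mul hα,
      div_mul_cancel₀ _ hν1.ne'] at this
  calc s = (s ^ 2) ^ (1 / 2 : ℝ) := by
        rw [← Real.rpow_natCast, ← Real.rpow_mul hs.le]; norm_num
    _ ≤ ((2 * A) ^ (ν + 1) * α ^ ν) ^ (1 / 2 : ℝ) := by gcongr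
    _ = (2 * A) ^ ((ν + 1) / 2) * α ^ (ν / 2) := by
      rw [Real.mul_rpow (by positivity) (by positivity), ← Real.rpow_mul (by positivity),
        ← Real.rpow_mul hα]
      ring_nf

section Contraction

variable {𝕜 E : Type*} [NontriviallyNormedField 𝕜] [SeminormedAddCommGroup E] [NormedSpace 𝕜 E]
  {B : E →L[𝕜] E}

theorem norm_pow_apply_le (hB : ∀ x, ‖B x‖ ≤ ‖x‖) (j : ℕ) (x : E) : ‖(B ^ j) x‖ ≤ ‖x‖ := by
  induction j with
  | zero => simp
  | succ j ih => rw [pow_succ', mul_apply_eq_comp]; exact (hB _).trans ih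

theorem norm_sub_pow_apply_le_of_eq_add (hB : ∀ x, ‖B x‖ ≤ ‖x‖) {c : E} {e : ℕ → E}
    (he : ∀ k, e (k + 1) = B (e k) + c) (k : ℕ) : ‖e k - (B ^ k) (e 0)‖ ≤ k * ‖c‖ := by
  induction k with
  | zero => simp
  | succ k ih =>
    calc ‖e (k + 1) - (B ^ (k + 1)) (e 0)‖ = ‖B (e k - (B ^ k) (e 0)) + c‖ := by
          rw [he, pow_succ', mul_apply_eq_comp, map_sub]; abel_nf
      _ ≤ k * ‖c‖ + ‖c‖ := norm_add_le_of_le ((hB _).trans ih) le_rfl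
      _ = (k + 1 : ℕ) * ‖c‖ := by push_cast; ring

end Contraction

section SourceCondition

variable {X Y : Type*} [NormedAddCommGroup X] [InnerProductSpace ℝ X] [CompleteSpace X]
  [NormedAddCommGroup Y] [InnerProductSpace ℝ Y] (T : X →L[ℝ] Y) {α : ℝ}

theorem norm_apply_le_of_source_condition {P : X →L[ℝ] X} (hP : IsSelfAdjoint P)
    (hPc : ∀ x, ‖P x‖ ≤ ‖x‖) (hTP : ∀ x, ‖T (P x)‖ ^ 2 ≤ α * ‖x‖ ^ 2) (hα : 0 ≤ α)
    {A ν : ℝ} (hA : 0 ≤ A) (hν : 0 ≤ ν) {ω : X}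
    (hω : ∀ f : X, ⟪ω, f⟫ ≤ 1 / 2 * ‖f‖ ^ 2 + A * (‖T f‖ ^ 2) ^ (ν / (ν + 1))) :
    ‖P ω‖ ≤ (2 * A) ^ ((ν + 1) / 2) * α ^ (ν / 2) := by
  refine le_of_sq_le_half_sq_add_mul_rpow (norm_nonneg _) hα hA hν ?_
  have h := hω (P (P ω))
  rw [← adjoint_inner_left, hP.adjoint_eq, real_inner_self_eq_norm_sq] at h
  have h1 : ‖P (P ω)‖ ^ 2 ≤ ‖P ω‖ ^ 2 := by gcongr; exact hPc _
  have h2 : (‖T (P (P ω))‖ ^ 2) ^ (ν / (ν + 1)) ≤ (α * ‖P ω‖ ^ 2) ^ (ν / (ν + 1)) := by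
    gcongr; exact hTP _
  nlinarith

end SourceCondition

section Tikhonov

variable {X Y : Type*} [NormedAddCommGroup X] [InnerProductSpace ℝ X] [CompleteSpace X]
  [NormedAddCommGroup Y] [InnerProductSpace ℝ Y] [CompleteSpace Y] (T : X →L[ℝ] Y) {α : ℝ}

theorem inner_adjoint_apply_add_smul_self (y : X) :
    ⟪(T†) (T y) + α • y, y⟫ = ‖T y‖ ^ 2 + α * ‖y‖ ^ 2 := by
  rw [inner_add_left, adjoint_inner_left, real_inner_smul_left, real_inner_self_eq_norm_sq,
    real_inner_self_eq_norm_sq]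

theorem mul_norm_le_norm_adjoint_apply_add_smul (y : X) :
    α * ‖y‖ ≤ ‖(T†) (T y) + α • y‖ := by
  have h := inner_adjoint_apply_add_smul_self T (α := α) y
  have := real_inner_le_norm ((T†) (T y) + α • y) y
  rcases (norm_nonneg y).eq_or_lt with hy | hy
  · rw [← hy]; simp
  · nlinarith [sq_nonneg ‖T y‖]

theorem norm_adjoint_apply_le_norm_adjoint_apply_add_smul (hα : 0 ≤ α) (y : X) :
    ‖(T†) (T y)‖ ≤ ‖(T†) (T y) + α • y‖ := by
  have h : ‖(T†) (T y) + α • y‖ ^ 2 = ‖(T†) (T y)‖ ^ 2 + 2 * α * ‖T y‖ ^ 2 + α ^ 2 * ‖y‖ ^ 2 := by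
    rw [norm_add_sq_real, real_inner_smul_right, adjoint_inner_left, real_inner_self_eq_norm_sq,
      norm_smul, Real.norm_eq_abs, mul_pow, sq_abs]
    ring
  rw [← pow_le_pow_iff_left₀ (norm_nonneg _) (norm_nonneg _) two_ne_zero, h]
  nlinarith [sq_nonneg ‖T y‖, sq_nonneg (α * ‖y‖)]

theorem four_mul_mul_sq_norm_apply_le (y : X) :
    4 * α * ‖T y‖ ^ 2 ≤ ‖(T†) (T y) + α • y‖ ^ 2 := by
  have h := inner_adjoint_apply_add_smul_self T (α := α) y
  have := real_inner_le_norm ((T†) (T y) + α • y) y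
  rcases le_or_gt α 0 with hα | hα
  · nlinarith [sq_nonneg ‖T y‖, sq_nonneg ‖(T†) (T y) + α • y‖]
  · nlinarith [sq_nonneg (‖(T†) (T y) + α • y‖ - 2 * α * ‖y‖)]

theorem four_mul_mul_sq_norm_le_of_adjoint_apply_eq {y : X} {z : Y}
    (h : (T†) z = (T†) (T y) + α • y) : 4 * α * ‖y‖ ^ 2 ≤ ‖z‖ ^ 2 := by
  have hy := inner_adjoint_apply_add_smul_self T (α := α) y
  rw [← h, adjoint_inner_left] at hy
  have := real_inner_le_norm z (T y)
  nlinarith [sq_nonneg (‖z‖ - 2 * ‖T y‖)]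

theorem norm_sub_sq_add_mul_norm_sub_sq_eq {g : Y} {f p : X}
    (hp : (T†) (T p) + α • p = (T†) g + α • f) (h : X) :
    ‖T h - g‖ ^ 2 + α * ‖h - f‖ ^ 2
      = ‖T p - g‖ ^ 2 + α * ‖p - f‖ ^ 2 + (‖T (h - p)‖ ^ 2 + α * ‖h - p‖ ^ 2) := by
  have hcross : ⟪T p - g, T (h - p)⟫ + α * ⟪p - f, h - p⟫ = 0 := by
    rw [← adjoint_inner_left, ← real_inner_smul_left, ← inner_add_left, map_sub, smul_sub]
    rw [show (T†) (T p) - (T†) g + (α • p - α • f) = 0 by rw [sub_add_sub_comm, hp, sub_self]]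
    exact inner_zero_left _
  have e1 : T h - g = (T p - g) + T (h - p) := by rw [map_sub]; abel
  have e2 : h - f = (p - f) + (h - p) := by abel
  rw [e1, e2, norm_add_sq_real, norm_add_sq_real]
  linear_combination 2 * hcross

theorem eq_of_forall_tikhonov_le (hα : 0 < α) {g : Y} {f p q : X}
    (hp : (T†) (T p) + α • p = (T†) g + α • f)
    (hq : ∀ h, ‖T q - g‖ ^ 2 + α * ‖q - f‖ ^ 2 ≤ ‖T h - g‖ ^ 2 + α * ‖h - f‖ ^ 2) : q = p := by
  have h := hq p
  rw [norm_sub_sq_add_mul_norm_sub_sq_eq T hp q] at h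
  have : ‖q - p‖ ^ 2 ≤ 0 := by nlinarith [sq_nonneg ‖T (q - p)‖]
  simpa [sub_eq_zero] using this

noncomputable def tikhonovResolvent (T : X →L[ℝ] Y) (α : ℝ) : X →L[ℝ] X :=
  Ring.inverse (T† ∘L T + α • 1)

theorem isUnit_adjoint_comp_self_add_smul_one (hα : 0 < α) :
    IsUnit (T† ∘L T + α • 1 : X →L[ℝ] X) := by
  set L : X →L[ℝ] X := T† ∘L T + α • 1
  have hL : IsCoercive ((innerSL ℝ) ∘L L) := ⟨α, hα, fun u => by
    change α * ‖u‖ * ‖u‖ ≤ ⟪L u, u⟫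
    rw [show L u = (T†) (T u) + α • u from rfl, inner_adjoint_apply_add_smul_self]
    nlinarith [sq_nonneg ‖T u‖]⟩
  have hE : (hL.continuousLinearEquivOfBilin : X →L[ℝ] X) = L :=
    ext fun v => ext_inner_right ℝ fun w => hL.continuousLinearEquivOfBilin_apply v w
  exact hE ▸ hL.continuousLinearEquivOfBilin.toUnit.isUnit

theorem adjoint_apply_tikhonovResolvent_add_smul (hα : 0 < α) (x : X) :
    (T†) (T (tikhonovResolvent T α x)) + α • tikhonovResolvent T α x = x := by
  have := congr($(Ring.mul_inverse_cancel _ (isUnit_adjoint_comp_self_add_smul_one T hα)) x)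
  simpa [tikhonovResolvent] using this

theorem tikhonovResolvent_adjoint_apply_add_smul (hα : 0 < α) (y : X) :
    tikhonovResolvent T α ((T†) (T y) + α • y) = y := by
  have := congr($(Ring.inverse_mul_cancel _ (isUnit_adjoint_comp_self_add_smul_one T hα)) y)
  simpa [tikhonovResolvent] using this

theorem commute_adjoint_comp_self_tikhonovResolvent (hα : 0 < α) :
    Commute (T† ∘L T) (tikhonovResolvent T α) := by
  obtain ⟨u, hu⟩ := isUnit_adjoint_comp_self_add_smul_one T hα
  have h : Commute (T† ∘L T) u :=
    hu ▸ (Commute.refl _).add_right ((Commute.one_right _).smul_right α)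
  rw [tikhonovResolvent, ← hu, Ring.inverse_unit]
  exact h.units_inv_right

theorem isSelfAdjoint_adjoint_comp_self_add_smul_one :
    IsSelfAdjoint (T† ∘L T + α • 1 : X →L[ℝ] X) :=
  (isPositive_adjoint_comp_self T).isSelfAdjoint.add ((IsSelfAdjoint.all α).smul (.one _))

theorem isSelfAdjoint_tikhonovResolvent : IsSelfAdjoint (tikhonovResolvent T α) :=
  (isSelfAdjoint_adjoint_comp_self_add_smul_one T).ringInverse

theorem norm_smul_tikhonovResolvent_apply_le (hα : 0 < α) (x : X) :
    ‖(α • tikhonovResolvent T α) x‖ ≤ ‖x‖ := by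
  have h := mul_norm_le_norm_adjoint_apply_add_smul T (α := α) (tikhonovResolvent T α x)
  rw [adjoint_apply_tikhonovResolvent_add_smul T hα] at h
  rwa [smul_apply, norm_smul, Real.norm_of_nonneg hα.le]

theorem norm_adjoint_comp_self_mul_tikhonovResolvent_apply_le (hα : 0 < α) (x : X) :
    ‖((T† ∘L T) * tikhonovResolvent T α) x‖ ≤ ‖x‖ := by
  have h := norm_adjoint_apply_le_norm_adjoint_apply_add_smul T hα.le (tikhonovResolvent T α x)
  rwa [adjoint_apply_tikhonovResolvent_add_smul T hα] at h

theorem sq_norm_apply_smul_tikhonovResolvent_apply_le (hα : 0 < α) (x : X) :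
    ‖T ((α • tikhonovResolvent T α) x)‖ ^ 2 ≤ α * ‖x‖ ^ 2 := by
  have h := four_mul_mul_sq_norm_apply_le T (α := α) (tikhonovResolvent T α x)
  rw [adjoint_apply_tikhonovResolvent_add_smul T hα] at h
  rw [smul_apply, map_smul, norm_smul, Real.norm_of_nonneg hα.le, mul_pow]
  nlinarith [sq_nonneg ‖T (tikhonovResolvent T α x)‖]

theorem two_mul_sqrt_mul_norm_tikhonovResolvent_adjoint_apply_le (hα : 0 < α) (z : Y) :
    2 * √α * ‖tikhonovResolvent T α ((T†) z)‖ ≤ ‖z‖ := by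
  have h := four_mul_mul_sq_norm_le_of_adjoint_apply_eq T
    (adjoint_apply_tikhonovResolvent_add_smul T hα ((T†) z)).symm
  rw [← pow_le_pow_iff_left₀ (by positivity) (norm_nonneg _) two_ne_zero, mul_pow, mul_pow,
    Real.sq_sqrt hα.le]
  linarith

theorem smul_tikhonovResolvent_pow_mul_pow (hα : 0 < α) (j : ℕ) :
    (α • tikhonovResolvent T α) ^ j * (T† ∘L T) ^ j
      = α ^ j • ((T† ∘L T) * tikhonovResolvent T α) ^ j := by
  rw [smul_pow, smul_mul_assoc, (commute_adjoint_comp_self_tikhonovResolvent T hα).mul_pow,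
    ((commute_adjoint_comp_self_tikhonovResolvent T hα).pow_pow _ _).eq]

theorem isSelfAdjoint_smul_tikhonovResolvent_pow_mul_pow (hα : 0 < α) (l j : ℕ) :
    IsSelfAdjoint ((α • tikhonovResolvent T α) ^ l * ((T† ∘L T) * tikhonovResolvent T α) ^ j) := by
  have hR := isSelfAdjoint_tikhonovResolvent T (α := α)
  have hSR := commute_adjoint_comp_self_tikhonovResolvent T hα
  have hB : IsSelfAdjoint (α • tikhonovResolvent T α) := (IsSelfAdjoint.all α).smul hR
  have hD : IsSelfAdjoint ((T† ∘L T) * tikhonovResolvent T α) :=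
    ((isPositive_adjoint_comp_self T).isSelfAdjoint.commute_iff hR).mp hSR
  have hBD : Commute (α • tikhonovResolvent T α) ((T† ∘L T) * tikhonovResolvent T α) :=
    (hSR.symm.mul_right (.refl _)).smul_left α
  exact ((hB.pow l).commute_iff (hD.pow j)).mp (hBD.pow_pow l j)

theorem norm_smul_tikhonovResolvent_pow_apply_le_of_source_condition (hα : 0 < α) {A ν : ℝ}
    (hA : 0 ≤ A) (hν : 0 ≤ ν) {ω : X}
    (hω : ∀ f : X, ⟪ω, f⟫ ≤ 1 / 2 * ‖f‖ ^ 2 + A * (‖T f‖ ^ 2) ^ (ν / (ν + 1))) (l j : ℕ) :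
    ‖((α • tikhonovResolvent T α) ^ (l + 1 + j)) (((T† ∘L T) ^ j) ω)‖
      ≤ α ^ j * ((2 * A) ^ ((ν + 1) / 2) * α ^ (ν / 2)) := by
  set B := α • tikhonovResolvent T α
  set D := (T† ∘L T) * tikhonovResolvent T α
  have hB := norm_smul_tikhonovResolvent_apply_le T hα
  have hD := norm_adjoint_comp_self_mul_tikhonovResolvent_apply_le T hα
  have hsplit : B ^ (l + 1 + j) * (T† ∘L T) ^ j = α ^ j • (B ^ (l + 1) * D ^ j) := by
    rw [pow_add, mul_assoc, smul_tikhonovResolvent_pow_mul_pow T hα, mul_smul_comm]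
  have hTP : ∀ x, ‖T ((B ^ (l + 1) * D ^ j) x)‖ ^ 2 ≤ α * ‖x‖ ^ 2 := fun x => by
    rw [pow_succ' B l, mul_assoc, mul_apply_eq_comp]
    refine (sq_norm_apply_smul_tikhonovResolvent_apply_le T hα _).trans ?_
    gcongr
    exact (norm_pow_apply_le hB l _).trans (norm_pow_apply_le hD j x)
  have hPc : ∀ x, ‖(B ^ (l + 1) * D ^ j) x‖ ≤ ‖x‖ := fun x =>
    (norm_pow_apply_le hB (l + 1) _).trans (norm_pow_apply_le hD j x)
  have hP := norm_apply_le_of_source_condition T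
    (isSelfAdjoint_smul_tikhonovResolvent_pow_mul_pow T hα (l + 1) j) hPc hTP hα.le hA hν hω
  rw [← mul_apply_eq_comp, hsplit, smul_apply, norm_smul, Real.norm_of_nonneg (by positivity)]
  gcongr

theorem norm_bregman_iterate_sub_le (hα : 0 < α) {A ν : ℝ} (hA : 0 ≤ A) (hν : 0 ≤ ν)
    {ω : X} (hω : ∀ f : X, ⟪ω, f⟫ ≤ 1 / 2 * ‖f‖ ^ 2 + A * (‖T f‖ ^ 2) ^ (ν / (ν + 1)))
    {j m : ℕ} (hjm : j < m) {g : Y} {f : ℕ → X} (hf0 : f 0 = 0)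
    (hf : ∀ k, f (k + 1) = tikhonovResolvent T α ((T†) g + α • f k)) :
    ‖f m - ((T† ∘L T) ^ j) ω‖ ≤ α ^ j * ((2 * A) ^ ((ν + 1) / 2) * α ^ (ν / 2))
      + m * (‖g - T (((T† ∘L T) ^ j) ω)‖ / (2 * √α)) := by
  set R := tikhonovResolvent T α
  set fdag := ((T† ∘L T) ^ j) ω
  have he : ∀ k, f (k + 1) - fdag = (α • R) (f k - fdag) + R ((T†) (g - T fdag)) := fun k => by
    rw [hf]
    nth_rw 1 [← tikhonovResolvent_adjoint_apply_add_smul T hα fdag]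
    simp only [smul_apply, map_sub, map_add, map_smul]
    abel
  have hnoise : ‖R ((T†) (g - T fdag))‖ ≤ ‖g - T fdag‖ / (2 * √α) := by
    rw [le_div_iff₀ (by positivity), mul_comm]
    exact two_mul_sqrt_mul_norm_tikhonovResolvent_adjoint_apply_le T hα _
  have hiter := norm_sub_pow_apply_le_of_eq_add (e := fun k => f k - fdag)
    (norm_smul_tikhonovResolvent_apply_le T hα) he m
  have hsource := norm_smul_tikhonovResolvent_pow_apply_le_of_source_condition T hα hA hν hω
    (m - j - 1) j
  rw [show m - j - 1 + 1 + j = m by omega] at hsource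
  rw [hf0, zero_sub, map_neg, sub_neg_eq_add] at hiter
  calc ‖f m - fdag‖ ≤ ‖f m - fdag + ((α • R) ^ m) fdag‖ + ‖((α • R) ^ m) fdag‖ := by
        simpa using norm_sub_le (f m - fdag + ((α • R) ^ m) fdag) (((α • R) ^ m) fdag)
    _ ≤ _ := by linarith [mul_le_mul_of_nonneg_left hnoise m.cast_nonneg]

end Tikhonov

theorem rpow_two_div_pow_mul_rpow {δ p q ν : ℝ} (hδ : 0 < δ) (hq : q ≠ 0) {k : ℕ}
    (hpq : 2 * k + ν = p) : (δ ^ (2 / q)) ^ k * (δ ^ (2 / q)) ^ (ν / 2) = δ ^ (p / q) := by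
  rw [← Real.rpow_natCast, ← Real.rpow_add (by positivity), ← Real.rpow_mul hδ.le, ← hpq]
  congr 1
  field_simp

theorem div_two_mul_sqrt_rpow_two_div {δ p q : ℝ} (hδ : 0 < δ) (hq : q ≠ 0) (hpq : p + 1 = q) :
    δ / (2 * √(δ ^ (2 / q))) = δ ^ (p / q) / 2 := by
  have hexp : p / q = 1 - 2 / q * (1 / 2) := by
    field_simp
    linarith
  rw [Real.sqrt_eq_rpow, ← Real.rpow_mul hδ.le, hexp, Real.rpow_sub hδ, Real.rpow_one]
  ring

/-- Under the Hölder-type variational source condition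
`VSC^{2n−1}(f†, A t^{ν/(ν+1)})`, Bregman iterated Tikhonov regularization with the
a-priori parameter choice `α = δ^{2/(2n−1+ν)}` yields the optimal convergence rate
`‖f_m − f†‖ ≤ C δ^{(2n−2+ν)/(2n−1+ν)}` for all `m ≥ n`. -/
theorem stmt_7 {X Y : Type*}
    [NormedAddCommGroup X] [InnerProductSpace ℝ X] [CompleteSpace X]
    [NormedAddCommGroup Y] [InnerProductSpace ℝ Y] [CompleteSpace Y]
    (T : X →L[ℝ] Y) (fdag : X) (n m : ℕ) (hn : 1 ≤ n) (hnm : n ≤ m)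
    (ν A : ℝ) (hν : ν ∈ Set.Ioc (0 : ℝ) 1) (hA : 0 < A)
    -- VSC^{2n−1}(f†, Φ) with Φ(t) = A t^{ν/(ν+1)}
    (hVSC : ∃ ω : X,
      fdag = ((ContinuousLinearMap.adjoint T ∘L T) ^ (n - 1)) ω ∧
      ∀ f : X, ⟪ω, f⟫ ≤ 1 / 2 * ‖f‖ ^ 2 + A * (‖T f‖ ^ 2) ^ (ν / (ν + 1))) :
    ∃ C : ℝ, 0 < C ∧
      ∀ δ : ℝ, 0 < δ → ∀ g : Y, ‖g - T fdag‖ ≤ δ →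
        -- Bregman iterated Tikhonov sequence for (g, α) with α = δ^{2/(2n−1+ν)}
        ∀ f : ℕ → X, f 0 = 0 →
          (∀ k : ℕ, 1 ≤ k → ∀ h : X,
            ‖T (f k) - g‖ ^ 2
                + δ ^ (2 / (2 * (n : ℝ) - 1 + ν)) * ‖f k - f (k - 1)‖ ^ 2
              ≤ ‖T h - g‖ ^ 2
                + δ ^ (2 / (2 * (n : ℝ) - 1 + ν)) * ‖h - f (k - 1)‖ ^ 2) →
          ‖f m - fdag‖ ≤ C * δ ^ ((2 * (n : ℝ) - 2 + ν) / (2 * (n : ℝ) - 1 + ν)) := by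
  obtain ⟨ω, rfl, hω⟩ := hVSC
  refine ⟨(2 * A) ^ ((ν + 1) / 2) + m / 2, by positivity, fun δ hδ g hg f hf0 hmin => ?_⟩
  have hq : 2 * (n : ℝ) - 1 + ν ≠ 0 := by
    have : (1 : ℝ) ≤ n := by exact_mod_cast hn
    linarith [hν.1]
  set α := δ ^ (2 / (2 * (n : ℝ) - 1 + ν))
  have hα : 0 < α := by positivity
  have hf : ∀ k, f (k + 1) = tikhonovResolvent T α ((T†) g + α • f k) := fun k =>
    eq_of_forall_tikhonov_le T hα (adjoint_apply_tikhonovResolvent_add_smul T hα _)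
      (by simpa using hmin (k + 1) (by omega))
  have hsource := rpow_two_div_pow_mul_rpow (k := n - 1) (ν := ν) hδ hq (p := 2 * (n : ℝ) - 2 + ν)
    (by push_cast [Nat.cast_sub hn]; ring)
  have hnoise := div_two_mul_sqrt_rpow_two_div hδ hq (p := 2 * (n : ℝ) - 2 + ν) (by ring)
  calc ‖f m - (((T†) ∘L T) ^ (n - 1)) ω‖
      ≤ α ^ (n - 1) * ((2 * A) ^ ((ν + 1) / 2) * α ^ (ν / 2)) + m * (δ / (2 * √α)) := by
        grw [norm_bregman_iterate_sub_le T hα hA.le hν.1.le hω (m := m) (by omega) hf0 hf, hg]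
    _ = _ := by
        rw [hnoise, mul_left_comm, hsource]
        ring
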